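/- arXiv:1501.05249 — 4 statements merged into one kernel-verified Lean document; each statement's English description precedes it below -/
import Mathlib

section
/- Let f : [R₀, ∞) → ℝ with R₀ > 1 be a positive, strictly increasing C² function satisfying f''(r) = a(r)² f(r), where a(r)² ≥ (1+ε)/(r² log r) for some ε > 0 and all r ≥ R₀. Then for any 0 < ε̃ < ε there exists R₁ ≥ R₀ such that for all r ≥ R₁ one has f'(r)/f(r) ≥ 1/r + (1+ε̃)/(r log r). -/
open Real Set Filter

/-!
Compare `f` with `φ(r) = r (log r)^(1+ε')`, which solves
`φ'' = ((1+ε')/(r² log r) + O(1/(r² log² r))) φ` and has `φ'/φ = 1/r + (1+ε')/(r log r)`.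
Since `a² ≥ (1+ε)/(r² log r)` with `ε > ε'`, the Wronskian `W = f' φ - f φ'` satisfies
`W' = f'' φ - f φ'' ≥ c/r` for large `r` (using `f ≥ f(R₀) > 0`), so `W ≥ c log r + O(1)` is
eventually nonnegative, i.e. `f'/f ≥ φ'/φ`.
-/

noncomputable def comparison (q r : ℝ) : ℝ := r * log r ^ (1 + q)

noncomputable def comparisonDeriv (q r : ℝ) : ℝ := log r ^ q * (log r + 1 + q)

lemma HasDerivAt.wronskian {f f' F F' : ℝ → ℝ} {f'' F'' r : ℝ}
    (hf : HasDerivAt f (f' r) r) (hf' : HasDerivAt f' f'' r)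
    (hF : HasDerivAt F (F' r) r) (hF' : HasDerivAt F' F'' r) :
    HasDerivAt (fun r => f' r * F r - f r * F' r) (f'' * F r - f r * F'') r :=
  ((hf'.mul hF).sub (hf.mul hF')).congr_deriv (by ring)

section Comparison

variable {q r : ℝ}

lemma hasDerivAt_comparison (hr : 1 < r) :
    HasDerivAt (comparison q) (comparisonDeriv q r) r := by
  have hL : 0 < log r := log_pos hr
  have h := (hasDerivAt_id r).mul
    ((hasDerivAt_log (by positivity)).rpow_const (p := 1 + q) (Or.inl hL.ne'))
  refine h.congr_deriv ?_
  simp only [comparisonDeriv, id, add_sub_cancel_left, rpow_add hL, rpow_one]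
  field_simp
  ring

lemma hasDerivAt_comparisonDeriv (hr : 1 < r) :
    HasDerivAt (comparisonDeriv q)
      ((1 + q) * log r ^ q * (log r + q) / (r * log r)) r := by
  have hL : 0 < log r := log_pos hr
  have hlog := hasDerivAt_log (x := r) (by positivity)
  have h : HasDerivAt (comparisonDeriv q) _ r :=
    (hlog.rpow_const (p := q) (Or.inl hL.ne')).mul ((hlog.add_const 1).add_const q)
  refine h.congr_deriv ?_
  rw [rpow_sub_one hL.ne']
  field_simp
  ring

lemma comparisonDeriv_div_comparison (hr : 1 < r) :
    comparisonDeriv q r / comparison q r = 1 / r + (1 + q) / (r * log r) := by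
  have hL : 0 < log r := log_pos hr
  rw [comparisonDeriv, comparison, rpow_add hL, rpow_one]
  field_simp
  ring

lemma comparison_pos (hr : 1 < r) : 0 < comparison q r :=
  mul_pos (by linarith) (rpow_pos_of_pos (log_pos hr) _)

lemma le_div_of_comparison_wronskian_nonneg {x y : ℝ} (hr : 1 < r) (hy : 0 < y)
    (hW : 0 ≤ x * comparison q r - y * comparisonDeriv q r) :
    1 / r + (1 + q) / (r * log r) ≤ x / y := by
  rw [← comparisonDeriv_div_comparison hr, div_le_div_iff₀ (comparison_pos hr) hy]
  linarith

lemma comparison_wronskian_deriv_ge {ε s y₀ y : ℝ} (hq : 0 ≤ q) (hy₀ : 0 ≤ y₀) (hy : y₀ ≤ y)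
    (hr : 0 < r) (hL : 1 ≤ log r) (hgap : 2 * q * (1 + q) ≤ (ε - q) * log r)
    (hs : (1 + ε) / (r ^ 2 * log r) ≤ s) :
    (ε - q) * y₀ / 2 / r ≤
      s * y * comparison q r - y * ((1 + q) * log r ^ q * (log r + q) / (r * log r)) := by
  set L := log r
  have hL0 : 0 < L := by linarith
  have hεq : 0 ≤ ε - q := by nlinarith
  have hy0 : 0 ≤ y := hy₀.trans hy
  have hs' : 1 + ε ≤ s * r ^ 2 * L := by
    rwa [div_le_iff₀ (by positivity), ← mul_assoc] at hs
  have hgap' : q * (1 + q) / L ≤ (ε - q) / 2 := by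
    rw [div_le_iff₀ hL0]
    linarith
  calc (ε - q) * y₀ / 2 / r ≤ (ε - q) * y / 2 / r := by gcongr
    _ = y / r * 1 * ((ε - q) / 2) := by ring
    _ ≤ y / r * L ^ q * ((ε - q) - q * (1 + q) / L) := by
        gcongr
        · exact one_le_rpow hL hq
        · linarith
    _ ≤ y / r * L ^ q * (s * r ^ 2 * L - (1 + q) - q * (1 + q) / L) := by
        gcongr _ * (?_ - _)
        linarith
    _ = s * y * comparison q r - y * ((1 + q) * L ^ q * (L + q) / (r * L)) := by
        rw [comparison, rpow_add hL0, rpow_one]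
        field_simp
        ring

end Comparison

lemma eventually_nonneg_of_hasDerivAt_of_div_le {W W' : ℝ → ℝ} {R c : ℝ} (hR : 0 < R)
    (hc : 0 < c) (hW : ∀ r ≥ R, HasDerivAt W (W' r) r) (hW' : ∀ r ≥ R, c / r ≤ W' r) :
    ∀ᶠ r in atTop, 0 ≤ W r := by
  have hderiv : ∀ r ≥ R, HasDerivAt (fun r => W r - c * log r) (W' r - c * r⁻¹) r :=
    fun r hr => (hW r hr).sub ((hasDerivAt_log (by linarith)).const_mul c)
  have hmono : MonotoneOn (fun r => W r - c * log r) (Ici R) :=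
    monotoneOn_of_hasDerivWithinAt_nonneg (convex_Ici R)
      (fun r hr => (hderiv r hr).continuousAt.continuousWithinAt)
      (fun r hr => (hderiv r (interior_subset hr)).hasDerivWithinAt)
      (fun r hr => by simpa [div_eq_mul_inv] using hW' r (interior_subset hr))
  have hgrow : Tendsto (fun r => W R - c * log R + c * log r) atTop atTop :=
    tendsto_atTop_add_const_left _ _ (tendsto_log_atTop.const_mul_atTop hc)
  refine (tendsto_atTop_mono' _ ?_ hgrow).eventually_ge_atTop 0
  filter_upwards [eventually_ge_atTop R] with r hr
  have := hmono (mem_Ici.2 le_rfl) (mem_Ici.2 hr) hr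
  dsimp only at this
  linarith

theorem stmt_0_general (R₀ ε : ℝ) (f f' f'' a : ℝ → ℝ)
    (hd1 : ∀ r ≥ R₀, HasDerivAt f (f' r) r)
    (hd2 : ∀ r ≥ R₀, HasDerivAt f' (f'' r) r)
    (hpos : ∀ r ≥ R₀, 0 < f r)
    (hmono : StrictMonoOn f (Set.Ici R₀))
    (hode : ∀ r ≥ R₀, f'' r = (a r) ^ 2 * f r)
    (ha : ∀ r ≥ R₀, (1 + ε) / (r ^ 2 * Real.log r) ≤ (a r) ^ 2)
    (ε' : ℝ) (hε'0 : 0 < ε') (hε' : ε' < ε) :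
    ∃ R₁ ≥ R₀, ∀ r ≥ R₁, 1 / r + (1 + ε') / (r * Real.log r) ≤ f' r / f r := by
  have hlarge : ∀ᶠ r in atTop, R₀ ≤ r ∧ 1 < r ∧ 1 ≤ log r ∧
      2 * ε' * (1 + ε') ≤ (ε - ε') * log r := by
    have hlog := tendsto_log_atTop.const_mul_atTop (sub_pos.2 hε')
    filter_upwards [eventually_ge_atTop R₀, eventually_gt_atTop 1,
      tendsto_log_atTop.eventually_ge_atTop 1, hlog.eventually_ge_atTop (2 * ε' * (1 + ε'))]
      with r h₁ h₂ h₃ h₄ using ⟨h₁, h₂, h₃, h₄⟩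
  obtain ⟨R, hR⟩ := eventually_atTop.1 hlarge
  have hW : ∀ r ≥ R, HasDerivAt (fun r => f' r * comparison ε' r - f r * comparisonDeriv ε' r)
      (f'' r * comparison ε' r -
        f r * ((1 + ε') * log r ^ ε' * (log r + ε') / (r * log r))) r := by
    intro r hr
    obtain ⟨hR₀r, hr1, -⟩ := hR r hr
    exact (hd1 r hR₀r).wronskian (hd2 r hR₀r) (hasDerivAt_comparison hr1)
      (hasDerivAt_comparisonDeriv hr1)
  have hW' : ∀ r ≥ R, (ε - ε') * f R₀ / 2 / r ≤ f'' r * comparison ε' r -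
      f r * ((1 + ε') * log r ^ ε' * (log r + ε') / (r * log r)) := by
    intro r hr
    obtain ⟨hR₀r, hr1, hL, hgap⟩ := hR r hr
    rw [hode r hR₀r]
    exact comparison_wronskian_deriv_ge hε'0.le (hpos R₀ le_rfl).le
      (hmono.monotoneOn (mem_Ici.2 le_rfl) hR₀r hR₀r) (by linarith) hL hgap (ha r hR₀r)
  have hR0 : 0 < R := zero_lt_one.trans (hR R le_rfl).2.1
  have hc : 0 < (ε - ε') * f R₀ / 2 := half_pos (mul_pos (sub_pos.2 hε') (hpos R₀ le_rfl))
  obtain ⟨R₁, hR₁⟩ := eventually_atTop.1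
    ((eventually_nonneg_of_hasDerivAt_of_div_le hR0 hc hW hW').and (eventually_ge_atTop R))
  refine ⟨max R₁ R₀, le_max_right _ _, fun r hr => ?_⟩
  obtain ⟨hWr, hRr⟩ := hR₁ r (le_of_max_le_left hr)
  exact le_div_of_comparison_wronskian_nonneg (hR r hRr).2.1 (hpos r (le_of_max_le_right hr)) hWr

theorem stmt_0 (R₀ ε : ℝ) (hR₀ : 1 < R₀) (hε : 0 < ε) (f f' f'' a : ℝ → ℝ)
    (hd1 : ∀ r ≥ R₀, HasDerivAt f (f' r) r)
    (hd2 : ∀ r ≥ R₀, HasDerivAt f' (f'' r) r)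
    (hpos : ∀ r ≥ R₀, 0 < f r)
    (hmono : StrictMonoOn f (Set.Ici R₀))
    (hode : ∀ r ≥ R₀, f'' r = (a r) ^ 2 * f r)
    (ha : ∀ r ≥ R₀, (1 + ε) / (r ^ 2 * Real.log r) ≤ (a r) ^ 2)
    (ε' : ℝ) (hε'0 : 0 < ε') (hε' : ε' < ε) :
    ∃ R₁ ≥ R₀, ∀ r ≥ R₁, 1 / r + (1 + ε') / (r * Real.log r) ≤ f' r / f r :=
  stmt_0_general R₀ ε f f' f'' a hd1 hd2 hpos hmono hode ha ε' hε'0 hε'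
end

section
/- Let f : [R₀, ∞) → ℝ with R₀ > 1 be a positive, strictly increasing C² function satisfying f''(r) = a(r)² f(r), where a(r)² ≥ (1+ε)/(r² log r) for some ε > 0 and all r ≥ R₀. Then for any 0 < ε̃ < ε there exists R₁ ≥ R₀ such that f(r) ≥ r (log r)^{1+ε̃} for all r ≥ R₁. -/
/-!
Compare `f` with `g r = r (log r)^q` for some `1 + ε' < q < 1 + ε`. The lower bound on `a²` makes
`g` a strict subsolution, `g'' + c / r ≤ a² g` for large `r`, so the Wronskian `W = f' g - f g'`
satisfies `W' = f (a² g - g'') ≥ f(R₀) c / r` and grows like `log r`. Once `W ≥ 0`, the quotient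
`f / g` is nondecreasing, hence `f ≥ C r (log r)^q`, and the surplus power `(log r)^(q - 1 - ε')`
absorbs the constant `C`.
-/

open Real Set Filter

lemma hasDerivAt_log_rpow (p : ℝ) {x : ℝ} (hx : 1 < x) :
    HasDerivAt (fun r => log r ^ p) (p * log x ^ (p - 1) / x) x := by
  convert (hasDerivAt_log (by linarith : x ≠ 0)).rpow_const (p := p)
    (Or.inl (log_pos hx).ne') using 1
  field_simp

lemma hasDerivAt_mul_log_rpow (p : ℝ) {x : ℝ} (hx : 1 < x) :
    HasDerivAt (fun r => r * log r ^ p) (log x ^ p + p * log x ^ (p - 1)) x := by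
  refine ((hasDerivAt_id' x).mul (hasDerivAt_log_rpow p hx)).congr_deriv ?_
  field_simp

lemma hasDerivAt_log_rpow_add_mul_log_rpow_sub_one (p : ℝ) {x : ℝ} (hx : 1 < x) :
    HasDerivAt (fun r => log r ^ p + p * log r ^ (p - 1))
      (p * log x ^ (p - 1) / x + p * (p - 1) * log x ^ (p - 2) / x) x := by
  refine ((hasDerivAt_log_rpow p hx).add
    ((hasDerivAt_log_rpow (p - 1) hx).const_mul p)).congr_deriv ?_
  rw [show p - 1 - 1 = p - 2 by ring]
  ring

lemma hasDerivAt_wronskian {f f' g g' : ℝ → ℝ} {f'' g'' x : ℝ}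
    (hf : HasDerivAt f (f' x) x) (hf' : HasDerivAt f' f'' x)
    (hg : HasDerivAt g (g' x) x) (hg' : HasDerivAt g' g'' x) :
    HasDerivAt (fun r => f' r * g r - f r * g' r) (f'' * g x - f x * g'') x :=
  ((hf'.mul hg).sub (hf.mul hg')).congr_deriv (by ring)

lemma monotoneOn_Ici_of_hasDerivAt_nonneg {F F' : ℝ → ℝ} {a : ℝ}
    (hF : ∀ x ≥ a, HasDerivAt F (F' x) x) (hF' : ∀ x ≥ a, 0 ≤ F' x) :
    MonotoneOn F (Ici a) :=
  monotoneOn_of_hasDerivWithinAt_nonneg (convex_Ici a)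
    (fun x hx => (hF x hx).continuousAt.continuousWithinAt)
    (fun x hx => (hF x (interior_subset hx)).hasDerivWithinAt)
    (fun x hx => hF' x (interior_subset hx))

lemma tendsto_atTop_of_div_le_deriv {W W' : ℝ → ℝ} {c : ℝ} (hc : 0 < c)
    (h : ∀ᶠ x in atTop, HasDerivAt W (W' x) x ∧ c / x ≤ W' x) :
    Tendsto W atTop atTop := by
  obtain ⟨R, hR⟩ := eventually_atTop.1 (h.and (eventually_gt_atTop 0))
  have hmono : MonotoneOn (fun x => W x - c * log x) (Ici R) :=
    monotoneOn_Ici_of_hasDerivAt_nonneg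
      (fun x hx => (hR x hx).1.1.sub ((hasDerivAt_log (hR x hx).2.ne').const_mul c))
      (fun x hx => by
        have := (hR x hx).1.2
        rw [div_eq_mul_inv] at this
        linarith)
  refine tendsto_atTop_mono' _ ?_ (tendsto_atTop_add_const_left _ (W R - c * log R)
    (tendsto_log_atTop.const_mul_atTop hc))
  filter_upwards [eventually_ge_atTop R] with x hx
  have := hmono self_mem_Ici hx hx
  dsimp only at this
  linarith

lemma exists_pos_mul_le_of_wronskian_nonneg {f f' g g' : ℝ → ℝ}
    (h : ∀ᶠ x in atTop, HasDerivAt f (f' x) x ∧ HasDerivAt g (g' x) x ∧ 0 < f x ∧ 0 < g x ∧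
      0 ≤ f' x * g x - f x * g' x) :
    ∃ C > 0, ∀ᶠ x in atTop, C * g x ≤ f x := by
  obtain ⟨ρ, hρ⟩ := eventually_atTop.1 h
  have hmono : MonotoneOn (fun x => f x / g x) (Ici ρ) :=
    monotoneOn_Ici_of_hasDerivAt_nonneg
      (fun x hx => (hρ x hx).1.div (hρ x hx).2.1 (hρ x hx).2.2.2.1.ne')
      (fun x hx => div_nonneg (hρ x hx).2.2.2.2 (sq_nonneg _))
  obtain ⟨-, -, hfρ, hgρ, -⟩ := hρ ρ le_rfl
  refine ⟨f ρ / g ρ, div_pos hfρ hgρ, ?_⟩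
  filter_upwards [eventually_ge_atTop ρ] with x hx
  exact (le_div_iff₀ (hρ x hx).2.2.2.1).1 (hmono self_mem_Ici hx hx)

lemma deriv2_mul_log_rpow_add_le {ε q x A : ℝ} (hq : 1 ≤ q) (hqε : q < 1 + ε) (hx : 0 < x)
    (hL : 1 ≤ log x) (hLq : 2 * q * (q - 1) / (1 + ε - q) ≤ log x)
    (hA : (1 + ε) / (x ^ 2 * log x) ≤ A) :
    q * log x ^ (q - 1) / x + q * (q - 1) * log x ^ (q - 2) / x + (1 + ε - q) / 2 / x ≤
      A * (x * log x ^ q) := by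
  set L := log x
  have hL0 : 0 < L := by linarith
  have hpow_succ : ∀ p : ℝ, L ^ (p + 1) = L * L ^ p := fun p => by
    rw [rpow_add hL0, rpow_one, mul_comm]
  have hq1 : 1 ≤ L ^ (q - 1) := one_le_rpow hL (by linarith)
  have hAg : (1 + ε) * L ^ (q - 1) / x ≤ A * (x * L ^ q) := by
    calc (1 + ε) * L ^ (q - 1) / x = (1 + ε) / (x ^ 2 * L) * (x * L ^ q) := by
          rw [show q = q - 1 + 1 by ring, hpow_succ]
          field_simp
          ring_nf
      _ ≤ A * (x * L ^ q) := mul_le_mul_of_nonneg_right hA (by positivity)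
  -- for `L ≥ 2q(q-1)/(1+ε-q)` the lower-order term costs at most half of the gap `1 + ε - q`
  have hgap : q * (q - 1) * L ^ (q - 2) ≤ (1 + ε - q) / 2 * L ^ (q - 1) := by
    rw [show q - 1 = q - 2 + 1 by ring, hpow_succ]
    have := (div_le_iff₀ (by linarith : (0 : ℝ) < 1 + ε - q)).1 hLq
    have hs : 0 < L ^ (q - 2) := rpow_pos_of_pos hL0 _
    nlinarith
  calc q * L ^ (q - 1) / x + q * (q - 1) * L ^ (q - 2) / x + (1 + ε - q) / 2 / x
      = (q * L ^ (q - 1) + q * (q - 1) * L ^ (q - 2) + (1 + ε - q) / 2) / x := by ring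
    _ ≤ (1 + ε) * L ^ (q - 1) / x := by
        gcongr
        nlinarith
    _ ≤ A * (x * L ^ q) := hAg

lemma exists_pos_mul_le_of_ode {R₀ ε q : ℝ} {f f' f'' A : ℝ → ℝ} (hq : 1 ≤ q) (hqε : q < 1 + ε)
    (hd1 : ∀ r ≥ R₀, HasDerivAt f (f' r) r) (hd2 : ∀ r ≥ R₀, HasDerivAt f' (f'' r) r)
    (hpos : 0 < f R₀) (hmono : MonotoneOn f (Ici R₀))
    (hode : ∀ r ≥ R₀, f'' r = A r * f r) (hA : ∀ r ≥ R₀, (1 + ε) / (r ^ 2 * log r) ≤ A r) :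
    ∃ C > 0, ∀ᶠ r in atTop, C * (r * log r ^ q) ≤ f r := by
  have hfR₀ : ∀ r ≥ R₀, f R₀ ≤ f r := fun r hr => hmono self_mem_Ici hr hr
  have hc : 0 < (1 + ε - q) / 2 := by linarith
  have hW : Tendsto (fun r => f' r * (r * log r ^ q) - f r * (log r ^ q + q * log r ^ (q - 1)))
      atTop atTop := by
    refine tendsto_atTop_of_div_le_deriv (W' := fun x => f'' x * (x * log x ^ q) -
      f x * (q * log x ^ (q - 1) / x + q * (q - 1) * log x ^ (q - 2) / x)) (mul_pos hpos hc) ?_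
    filter_upwards [eventually_ge_atTop R₀, eventually_gt_atTop 1,
      tendsto_log_atTop.eventually_ge_atTop 1,
      tendsto_log_atTop.eventually_ge_atTop (2 * q * (q - 1) / (1 + ε - q))] with x hxR₀ hx hL hLq
    refine ⟨hasDerivAt_wronskian (hd1 x hxR₀) (hd2 x hxR₀) (hasDerivAt_mul_log_rpow q hx)
      (hasDerivAt_log_rpow_add_mul_log_rpow_sub_one q hx), ?_⟩
    have hdefect := deriv2_mul_log_rpow_add_le hq hqε (by linarith) hL hLq (hA x hxR₀)
    rw [hode x hxR₀]
    calc f R₀ * ((1 + ε - q) / 2) / x = f R₀ * ((1 + ε - q) / 2 / x) := by ring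
      _ ≤ f x * (A x * (x * log x ^ q) -
            (q * log x ^ (q - 1) / x + q * (q - 1) * log x ^ (q - 2) / x)) :=
          mul_le_mul (hfR₀ x hxR₀) (by linarith) (by positivity) (hpos.trans_le (hfR₀ x hxR₀)).le
      _ = _ := by ring
  refine exists_pos_mul_le_of_wronskian_nonneg (f' := f')
    (g' := fun r => log r ^ q + q * log r ^ (q - 1)) ?_
  filter_upwards [eventually_ge_atTop R₀, eventually_gt_atTop 1, hW.eventually_ge_atTop 0]
    with x hxR₀ hx hWx
  exact ⟨hd1 x hxR₀, hasDerivAt_mul_log_rpow q hx, hpos.trans_le (hfR₀ x hxR₀),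
    mul_pos (by linarith) (rpow_pos_of_pos (log_pos hx) q), hWx⟩

lemma eventually_mul_log_rpow_le_of_const_mul_le {f : ℝ → ℝ} {C p q : ℝ} (hC : 0 < C)
    (hpq : p < q) (h : ∀ᶠ r in atTop, C * (r * log r ^ q) ≤ f r) :
    ∀ᶠ r in atTop, r * log r ^ p ≤ f r := by
  have hlim : Tendsto (fun r => C * log r ^ (q - p)) atTop atTop :=
    ((tendsto_rpow_atTop (sub_pos.2 hpq)).comp tendsto_log_atTop).const_mul_atTop hC
  filter_upwards [h, hlim.eventually_ge_atTop 1, eventually_gt_atTop 1] with r hr hCL hr1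
  have hL := log_pos hr1
  calc r * log r ^ p ≤ C * log r ^ (q - p) * (r * log r ^ p) :=
        le_mul_of_one_le_left (by positivity) hCL
    _ = C * (r * (log r ^ (q - p) * log r ^ p)) := by ring
    _ = C * (r * log r ^ q) := by rw [← rpow_add hL, sub_add_cancel]
    _ ≤ f r := hr

theorem stmt_1_general (R₀ ε : ℝ) (f f' f'' a : ℝ → ℝ)
    (hd1 : ∀ r ≥ R₀, HasDerivAt f (f' r) r)
    (hd2 : ∀ r ≥ R₀, HasDerivAt f' (f'' r) r)
    (hpos : ∀ r ≥ R₀, 0 < f r)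
    (hmono : StrictMonoOn f (Set.Ici R₀))
    (hode : ∀ r ≥ R₀, f'' r = (a r) ^ 2 * f r)
    (ha : ∀ r ≥ R₀, (1 + ε) / (r ^ 2 * Real.log r) ≤ (a r) ^ 2)
    (ε' : ℝ) (hε'0 : 0 < ε') (hε' : ε' < ε) :
    ∃ R₁ ≥ R₀, ∀ r ≥ R₁, r * (Real.log r) ^ (1 + ε') ≤ f r := by
  obtain ⟨C, hC, hCf⟩ := exists_pos_mul_le_of_ode (q := 1 + (ε + ε') / 2) (by linarith)
    (by linarith) hd1 hd2 (hpos R₀ le_rfl) hmono.monotoneOn hode ha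
  obtain ⟨R, hR⟩ :=
    eventually_atTop.1 (eventually_mul_log_rpow_le_of_const_mul_le (p := 1 + ε') hC (by linarith) hCf)
  exact ⟨max R R₀, le_max_right _ _, fun r hr => hR r (le_of_max_le_left hr)⟩

theorem stmt_1 (R₀ ε : ℝ) (hR₀ : 1 < R₀) (hε : 0 < ε) (f f' f'' a : ℝ → ℝ)
    (hd1 : ∀ r ≥ R₀, HasDerivAt f (f' r) r)
    (hd2 : ∀ r ≥ R₀, HasDerivAt f' (f'' r) r)
    (hpos : ∀ r ≥ R₀, 0 < f r)
    (hmono : StrictMonoOn f (Set.Ici R₀))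
    (hode : ∀ r ≥ R₀, f'' r = (a r) ^ 2 * f r)
    (ha : ∀ r ≥ R₀, (1 + ε) / (r ^ 2 * Real.log r) ≤ (a r) ^ 2)
    (ε' : ℝ) (hε'0 : 0 < ε') (hε' : ε' < ε) :
    ∃ R₁ ≥ R₀, ∀ r ≥ R₁, r * (Real.log r) ^ (1 + ε') ≤ f r :=
  stmt_1_general R₀ ε f f' f'' a hd1 hd2 hpos hmono hode ha ε' hε'0 hε'
end

section
/- Let κ = n/(n-1) for an integer n ≥ 2, and let (Iⱼ)_{j≥0} be a sequence of nonnegative reals satisfying I_{j+1} ≤ C^{1/κʲ} κ^{j/κʲ} Iⱼ for all j ≥ 0, where C ≥ 1. Then limsup_{j→∞} Iⱼ ≤ Cⁿ κ^S I₀, where S = Σ_{j=0}^∞ j κ^{-j} < ∞. -/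
/-!
Iterating the recursion gives `I j ≤ C ^ (∑_{k<j} κ⁻ᵏ) * κ ^ (∑_{k<j} k κ⁻ᵏ) * I 0`. Since `C ≥ 1`
and `κ > 1`, both partial sums may be replaced by the full series, which are `n` (geometric
series with ratio `1 - 1/n`) and `S`. The resulting bound is uniform in `j`, so it also bounds
the limsup.
-/

open Real Filter Finset

theorem le_prod_mul_of_le_mul {I a : ℕ → ℝ} (ha : ∀ j, 0 ≤ a j)
    (h : ∀ j, I (j + 1) ≤ a j * I j) (j : ℕ) : I j ≤ (∏ k ∈ range j, a k) * I 0 := by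
  induction j with
  | zero => simp
  | succ j ih =>
    calc I (j + 1) ≤ a j * I j := h j
      _ ≤ a j * ((∏ k ∈ range j, a k) * I 0) := mul_le_mul_of_nonneg_left ih (ha j)
      _ = (∏ k ∈ range (j + 1), a k) * I 0 := by rw [prod_range_succ]; ring

theorem le_rpow_tsum_mul_rpow_tsum_mul {C b : ℝ} (hC : 1 ≤ C) (hb : 1 ≤ b) {x y I : ℕ → ℝ}
    (hx : ∀ j, 0 ≤ x j) (hy : ∀ j, 0 ≤ y j) (hxs : Summable x) (hys : Summable y)
    (hI0 : 0 ≤ I 0) (h : ∀ j, I (j + 1) ≤ C ^ x j * b ^ y j * I j) (j : ℕ) :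
    I j ≤ C ^ (∑' k, x k) * b ^ (∑' k, y k) * I 0 := by
  have hC0 : 0 < C := by linarith
  have hb0 : 0 < b := by linarith
  calc I j ≤ (∏ k ∈ range j, C ^ x k * b ^ y k) * I 0 :=
        le_prod_mul_of_le_mul (fun k => by positivity) h j
    _ = C ^ (∑ k ∈ range j, x k) * b ^ (∑ k ∈ range j, y k) * I 0 := by
        rw [prod_mul_distrib, rpow_sum_of_pos hC0, rpow_sum_of_pos hb0]
    _ ≤ C ^ (∑' k, x k) * b ^ (∑' k, y k) * I 0 := by
        gcongr
        · exact hxs.sum_le_tsum _ fun k _ => hx k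
        · exact hys.sum_le_tsum _ fun k _ => hy k

theorem limsup_le_rpow_tsum_mul_rpow_tsum_mul {C b : ℝ} (hC : 1 ≤ C) (hb : 1 ≤ b)
    {x y I : ℕ → ℝ} (hx : ∀ j, 0 ≤ x j) (hy : ∀ j, 0 ≤ y j) (hxs : Summable x)
    (hys : Summable y) (hI : ∀ j, 0 ≤ I j) (h : ∀ j, I (j + 1) ≤ C ^ x j * b ^ y j * I j) :
    limsup I atTop ≤ C ^ (∑' k, x k) * b ^ (∑' k, y k) * I 0 :=
  limsup_le_of_le (isCoboundedUnder_le_of_le atTop hI) <| .of_forall <|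
    le_rpow_tsum_mul_rpow_tsum_mul hC hb hx hy hxs hys (hI 0) h

theorem stmt_11 (n : ℕ) (hn : 2 ≤ n) (C : ℝ) (hC : 1 ≤ C) (I : ℕ → ℝ)
    (hI : ∀ j, 0 ≤ I j)
    (hrec : ∀ j : ℕ, I (j + 1) ≤
      C ^ (1 / ((n : ℝ) / ((n : ℝ) - 1)) ^ j)
        * ((n : ℝ) / ((n : ℝ) - 1)) ^ ((j : ℝ) / ((n : ℝ) / ((n : ℝ) - 1)) ^ j) * I j) :
    Summable (fun j : ℕ => (j : ℝ) * ((n : ℝ) / ((n : ℝ) - 1)) ^ (-(j : ℝ))) ∧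
      Filter.limsup I Filter.atTop ≤
        C ^ (n : ℝ) *
          ((n : ℝ) / ((n : ℝ) - 1)) ^ (∑' j : ℕ, (j : ℝ) * ((n : ℝ) / ((n : ℝ) - 1)) ^ (-(j : ℝ)))
          * I 0 := by
  have hn2 : (2 : ℝ) ≤ n := by exact_mod_cast hn
  set κ : ℝ := (n : ℝ) / ((n : ℝ) - 1) with hκ
  have hκ1 : 1 < κ := by rw [hκ, one_lt_div (by linarith)]; linarith
  have hr0 : 0 ≤ κ⁻¹ := by positivity
  have hr1 : κ⁻¹ < 1 := inv_lt_one_of_one_lt₀ hκ1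
  have hrpow : ∀ j : ℕ, κ ^ (-(j : ℝ)) = κ⁻¹ ^ j := fun j => by
    rw [rpow_neg (by positivity), rpow_natCast, inv_pow]
  have hgeom : ∑' j : ℕ, κ⁻¹ ^ j = n := by
    rw [tsum_geometric_of_lt_one hr0 hr1, hκ]
    field_simp
    ring
  have hS : Summable fun j : ℕ => (j : ℝ) * κ⁻¹ ^ j :=
    (hasSum_coe_mul_geometric_of_norm_lt_one (by rwa [norm_of_nonneg hr0])).summable
  simp only [hrpow]
  refine ⟨hS, ?_⟩
  rw [← hgeom]
  refine limsup_le_rpow_tsum_mul_rpow_tsum_mul hC hκ1.le (fun j => by positivity)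
    (fun j => by positivity) (summable_geometric_of_lt_one hr0 hr1) hS hI fun j => ?_
  simpa only [div_eq_mul_inv, one_mul, inv_pow] using hrec j
end

section
/- Let H : [0,∞) → [0,∞) be a homeomorphism with H(t) = (log(1/t))^{-1} (log log(1/t))^{-λ} for all sufficiently small t > 0, where λ > 1. Define G(t) = ∫₀ᵗ H(s) ds. Then ∫₀¹ dt/G⁻¹(t) < ∞. -/
/-!
Near `0` the weight `H x / x = 1 / (x log(1/x) (log log(1/x))^λ)` is the derivative of
`(log log(1/x))^(1-λ) / (λ - 1)`, which tends to `0` as `x → 0⁺` because `λ > 1`; so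
`H x / x` is integrable near `0`. The substitution `t = G x`, `dt = H x dx`, turns
`∫ dt / G⁻¹ t` over `(0, G a]` into `∫ H x / x dx` over `(0, a]`, and on `[G a, 1]` the
integrand `1 / G⁻¹` is monotone, hence integrable.
-/

open Real Set MeasureTheory Filter Topology

lemma log_log_inv_pos {x : ℝ} (hx : 0 < x) (hxe : x < exp (-1)) :
    1 < log x⁻¹ ∧ 0 < log (log x⁻¹) := by
  have hL : 1 < log x⁻¹ := by
    rw [lt_log_iff_exp_lt (inv_pos.2 hx), lt_inv_comm₀ (exp_pos 1) hx, ← exp_neg]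
    exact hxe
  exact ⟨hL, log_pos hL⟩

lemma hasDerivAt_rpow_log_log_inv {lam x : ℝ} (hlam : lam ≠ 1) (hx : 0 < x)
    (hxe : x < exp (-1)) :
    HasDerivAt (fun y => log (log y⁻¹) ^ (1 - lam) / (lam - 1))
      ((log x⁻¹)⁻¹ * log (log x⁻¹) ^ (-lam) / x) x := by
  obtain ⟨hL, hLL⟩ := log_log_inv_pos hx hxe
  have h := (((hasDerivAt_inv hx.ne').log (inv_ne_zero hx.ne')).log
    (by linarith)).rpow_const (p := 1 - lam) (Or.inl hLL.ne')
  refine (h.div_const (lam - 1)).congr_deriv ?_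
  rw [show 1 - lam - 1 = -lam by ring]
  have : lam - 1 ≠ 0 := sub_ne_zero.2 hlam
  field_simp
  ring

lemma tendsto_rpow_log_log_inv_nhdsGT_zero {lam : ℝ} (hlam : 1 < lam) :
    Tendsto (fun y => log (log y⁻¹) ^ (1 - lam)) (𝓝[>] 0) (𝓝 0) := by
  simpa [Function.comp_def] using (tendsto_rpow_neg_atTop (sub_pos.2 hlam)).comp
    (tendsto_log_atTop.comp (tendsto_log_atTop.comp tendsto_inv_nhdsGT_zero))

lemma integrableOn_log_log_inv_weight {lam a : ℝ} (hlam : 1 < lam) (ha : a < exp (-1)) :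
    IntegrableOn (fun x => (log x⁻¹)⁻¹ * log (log x⁻¹) ^ (-lam) / x) (Ioc 0 a) := by
  set g := fun y : ℝ => log (log y⁻¹) ^ (1 - lam) / (lam - 1)
  have hg_cont : ContinuousOn g (Icc 0 a) := by
    intro x hx
    rcases hx.1.eq_or_lt with rfl | hx0
    · -- `g 0 = 0` through the junk values `0⁻¹ = 0`, `log 0 = 0` and `0 ^ (1 - λ) = 0`.
      have hg0 : g 0 = 0 := by
        simp only [g, inv_zero, log_zero, zero_rpow (sub_ne_zero.2 hlam.ne), zero_div]
      refine (continuousWithinAt_Ioi_iff_Ici.1 ?_).mono Icc_subset_Ici_self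
      rw [ContinuousWithinAt, hg0]
      simpa only [zero_div] using (tendsto_rpow_log_log_inv_nhdsGT_zero hlam).div_const (lam - 1)
    · exact (hasDerivAt_rpow_log_log_inv hlam.ne' hx0
        (hx.2.trans_lt ha)).continuousAt.continuousWithinAt
  refine intervalIntegral.integrableOn_deriv_of_nonneg hg_cont
    (fun x hx => hasDerivAt_rpow_log_log_inv hlam.ne' hx.1 (hx.2.trans ha)) fun x hx => ?_
  obtain ⟨hL, hLL⟩ := log_log_inv_pos hx.1 (hx.2.trans ha)
  exact div_nonneg (mul_nonneg (inv_nonneg.2 (by linarith)) (rpow_nonneg hLL.le _)) hx.1.le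

lemma intervalIntegrable_of_continuousOn_Ici {H : ℝ → ℝ} (hH : ContinuousOn H (Ici 0))
    {x y : ℝ} (hx : 0 ≤ x) (hy : 0 ≤ y) : IntervalIntegrable H volume x y :=
  (hH.mono fun _ ht => le_min hx hy |>.trans ht.1).intervalIntegrable

lemma hasDerivAt_of_eq_integral {H G : ℝ → ℝ} (hH : ContinuousOn H (Ici 0))
    (hG : ∀ t ≥ 0, G t = ∫ s in 0..t, H s) {x : ℝ} (hx : 0 < x) : HasDerivAt G (H x) x :=
  (intervalIntegral.integral_hasDerivAt_right
    (intervalIntegrable_of_continuousOn_Ici hH le_rfl hx.le)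
    ((hH.mono Ioi_subset_Ici_self).stronglyMeasurableAtFilter isOpen_Ioi x hx)
    (hH.continuousAt (Ici_mem_nhds hx))).congr_of_eventuallyEq
    (eventually_of_mem (Ioi_mem_nhds hx) fun t ht => hG t (le_of_lt ht))

lemma strictMonoOn_of_eq_integral {H G : ℝ → ℝ} (hH : ContinuousOn H (Ici 0))
    (hHpos : ∀ x > 0, 0 < H x) (hG : ∀ t ≥ 0, G t = ∫ s in 0..t, H s) :
    StrictMonoOn G (Ici 0) := by
  intro x (hx : 0 ≤ x) y (hy : 0 ≤ y) hxy
  have hxy_int := intervalIntegrable_of_continuousOn_Ici hH hx hy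
  have hpos : 0 < ∫ s in x..y, H s := intervalIntegral.intervalIntegral_pos_of_pos_on hxy_int
    (fun t ht => hHpos t (hx.trans_lt ht.1)) hxy
  have hsplit := intervalIntegral.integral_add_adjacent_intervals
    (intervalIntegrable_of_continuousOn_Ici hH le_rfl hx) hxy_int
  rw [hG x hx, hG y hy]
  linarith

section RightInverse

variable {G Ginv : ℝ → ℝ}

lemma StrictMonoOn.monotoneOn_of_rightInvOn (hG : StrictMonoOn G (Ici 0))
    (hright : RightInvOn Ginv G (Ici 0)) (hmaps : MapsTo Ginv (Ici 0) (Ici 0)) :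
    MonotoneOn Ginv (Ici 0) := fun s hs t ht hst =>
  (hG.le_iff_le (hmaps hs) (hmaps ht)).1 (by rwa [hright hs, hright ht])

lemma pos_of_rightInvOn (hG0 : G 0 = 0) (hright : RightInvOn Ginv G (Ici 0))
    (hmaps : MapsTo Ginv (Ici 0) (Ici 0)) {t : ℝ} (ht : 0 < t) : 0 < Ginv t := by
  refine (hmaps ht.le).lt_of_ne fun h => ht.ne ?_
  rw [← hright ht.le, ← h, hG0]

lemma StrictMonoOn.image_Ioc_zero (hG : StrictMonoOn G (Ici 0)) (hG0 : G 0 = 0)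
    (hright : RightInvOn Ginv G (Ici 0)) (hmaps : MapsTo Ginv (Ici 0) (Ici 0)) {a : ℝ}
    (ha : 0 ≤ a) : G '' Ioc 0 a = Ioc 0 (G a) := by
  apply Subset.antisymm
  · rintro _ ⟨x, hx, rfl⟩
    exact ⟨hG0 ▸ hG self_mem_Ici hx.1.le hx.1, hG.monotoneOn hx.1.le ha hx.2⟩
  · intro t ht
    have hx := pos_of_rightInvOn hG0 hright hmaps ht.1
    refine ⟨Ginv t, ⟨hx, ?_⟩, hright ht.1.le⟩
    rw [← hG.le_iff_le hx.le ha, hright ht.1.le]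
    exact ht.2

lemma integrableOn_Ioc_comp_rightInvOn_iff {H : ℝ → ℝ} (hG : StrictMonoOn G (Ici 0))
    (hG0 : G 0 = 0) (hderiv : ∀ x > 0, HasDerivAt G (H x) x) (hH : ∀ x > 0, 0 ≤ H x)
    (hleft : LeftInvOn Ginv G (Ici 0)) (hright : RightInvOn Ginv G (Ici 0))
    (hmaps : MapsTo Ginv (Ici 0) (Ici 0)) {a : ℝ} (ha : 0 ≤ a) (f : ℝ → ℝ) :
    IntegrableOn (fun t => f (Ginv t)) (Ioc 0 (G a)) ↔
      IntegrableOn (fun x => H x * f x) (Ioc 0 a) := by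
  rw [← hG.image_Ioc_zero hG0 hright hmaps ha,
    integrableOn_image_iff_integrableOn_abs_deriv_smul measurableSet_Ioc
      (fun x hx => (hderiv x hx.1).hasDerivWithinAt) (hG.injOn.mono fun x hx => hx.1.le)]
  refine integrableOn_congr_fun (fun x hx => ?_) measurableSet_Ioc
  rw [abs_of_nonneg (hH x hx.1), smul_eq_mul, hleft hx.1.le]

lemma integrableOn_Ioc_one_div_of_rightInvOn (hG : StrictMonoOn G (Ici 0)) (hG0 : G 0 = 0)
    (hright : RightInvOn Ginv G (Ici 0)) (hmaps : MapsTo Ginv (Ici 0) (Ici 0)) {b c : ℝ}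
    (hb : 0 < b) : IntegrableOn (fun t => 1 / Ginv t) (Ioc b c) := by
  refine (AntitoneOn.integrableOn_isCompact isCompact_Icc ?_).mono_set Ioc_subset_Icc_self
  intro s hs t ht hst
  exact one_div_le_one_div_of_le (pos_of_rightInvOn hG0 hright hmaps (hb.trans_le hs.1))
    (hG.monotoneOn_of_rightInvOn hright hmaps (hb.le.trans hs.1) (hb.le.trans ht.1) hst)

end RightInverse

theorem stmt_17_general (lam : ℝ) (hlam : 1 < lam) (H G Ginv : ℝ → ℝ)
    (hHmono : StrictMonoOn H (Set.Ici 0))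
    (hHcont : ContinuousOn H (Set.Ici 0))
    (hH0 : H 0 = 0)
    (hsmall : ∃ δ > (0 : ℝ), ∀ t ∈ Set.Ioo (0 : ℝ) δ,
      H t = (Real.log (1 / t))⁻¹ * (Real.log (Real.log (1 / t))) ^ (-lam))
    (hG : ∀ t ≥ (0 : ℝ), G t = ∫ s in (0 : ℝ)..t, H s)
    (hGinv1 : ∀ t ≥ (0 : ℝ), Ginv (G t) = t)
    (hGinv2 : ∀ t ≥ (0 : ℝ), G (Ginv t) = t)
    (hGinvnn : ∀ t ≥ (0 : ℝ), 0 ≤ Ginv t) :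
    MeasureTheory.IntegrableOn (fun t => 1 / Ginv t) (Set.Ioc (0 : ℝ) 1) := by
  obtain ⟨δ, hδ, hH_eq⟩ := hsmall
  obtain ⟨a, ha0, haδ, hae⟩ : ∃ a, 0 < a ∧ a < δ ∧ a < exp (-1) :=
    ⟨min (δ / 2) (exp (-1) / 2), by positivity,
      by linarith [min_le_left (δ / 2) (exp (-1) / 2)],
      by linarith [min_le_right (δ / 2) (exp (-1) / 2), exp_pos (-1)]⟩
  have hHpos : ∀ x > 0, 0 < H x := fun x hx => hH0 ▸ hHmono self_mem_Ici hx.le hx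
  have hGmono := strictMonoOn_of_eq_integral hHcont hHpos hG
  have hG0 : G 0 = 0 := by simpa using hG 0 le_rfl
  have hleft : LeftInvOn Ginv G (Ici 0) := fun t ht => hGinv1 t ht
  have hright : RightInvOn Ginv G (Ici 0) := fun t ht => hGinv2 t ht
  have hmaps : MapsTo Ginv (Ici 0) (Ici 0) := fun t ht => hGinvnn t ht
  have hweight : IntegrableOn (fun x => H x * (1 / x)) (Ioc 0 a) := by
    refine (integrableOn_log_log_inv_weight hlam hae).congr_fun (fun x hx => ?_) measurableSet_Ioc
    rw [hH_eq x ⟨hx.1, hx.2.trans_lt haδ⟩]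
    simp only [div_eq_mul_inv, one_mul]
  have hnear := (integrableOn_Ioc_comp_rightInvOn_iff hGmono hG0
    (fun x hx => hasDerivAt_of_eq_integral hHcont hG hx) (fun x hx => (hHpos x hx).le) hleft
    hright hmaps ha0.le _).2 hweight
  have hfar := integrableOn_Ioc_one_div_of_rightInvOn (c := 1) hGmono hG0 hright hmaps
    (hG0 ▸ hGmono self_mem_Ici ha0.le ha0)
  exact (hnear.union hfar).mono_set Ioc_subset_Ioc_union_Ioc

theorem stmt_17 (lam : ℝ) (hlam : 1 < lam) (H G Ginv : ℝ → ℝ)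
    (hHnn : ∀ t ≥ (0 : ℝ), 0 ≤ H t)
    (hHmono : StrictMonoOn H (Set.Ici 0))
    (hHcont : ContinuousOn H (Set.Ici 0))
    (hH0 : H 0 = 0)
    (hHsurj : Set.SurjOn H (Set.Ici 0) (Set.Ici 0))
    (hsmall : ∃ δ > (0 : ℝ), ∀ t ∈ Set.Ioo (0 : ℝ) δ,
      H t = (Real.log (1 / t))⁻¹ * (Real.log (Real.log (1 / t))) ^ (-lam))
    (hG : ∀ t ≥ (0 : ℝ), G t = ∫ s in (0 : ℝ)..t, H s)
    (hGinv1 : ∀ t ≥ (0 : ℝ), Ginv (G t) = t)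
    (hGinv2 : ∀ t ≥ (0 : ℝ), G (Ginv t) = t)
    (hGinvnn : ∀ t ≥ (0 : ℝ), 0 ≤ Ginv t) :
    MeasureTheory.IntegrableOn (fun t => 1 / Ginv t) (Set.Ioc (0 : ℝ) 1) :=
  stmt_17_general lam hlam H G Ginv hHmono hHcont hH0 hsmall hG hGinv1 hGinv2 hGinvnn
end
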